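/- arXiv:2602.17978 — 4 statements merged into one kernel-verified Lean document; each statement's English description precedes it below -/
import Mathlib

section
/- The score function ψ(D; f, (s,g)) = (s(C) − g(f,C))² obeys the Neyman orthogonality conditions at (f₀, (s₀, g₀)): (i) E[(s₀(C) − g₀(f₀, C))²] = 0, since s₀(C) = E[Y|C] = E[f₀(X)|C] = g₀(f₀, C) almost surely; and (ii) for all square-integrable perturbations s : 𝒞 → ℝ and g, the Gateaux derivative at r = 0 of the map r ↦ E[(s₀(C) + r·s(C) − g₀(f₀, C) − r·g(f₀, C))²] equals 0. -/
/-! The conditional moment restriction forces `E[Y | C] = E[f₀(X) | C]` almost surely, so the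
score vanishes at the truth and the perturbed objective collapses to `r² · E[(s(C) - g(C))²]`,
a quadratic in `r` with a double root at `0`. -/

open MeasureTheory ProbabilityTheory

section

variable {Ω : Type*} {m m0 : MeasurableSpace Ω} {μ : Measure Ω}

theorem condExp_ae_eq_of_condExp_sub_ae_eq_zero {f g : Ω → ℝ} (hf : Integrable f μ)
    (hg : Integrable g μ) (hfg : μ[f - g|m] =ᵐ[μ] 0) : μ[f|m] =ᵐ[μ] μ[g|m] := by
  filter_upwards [(condExp_sub hf hg m).symm.trans hfg] with ω hω
  exact sub_eq_zero.mp hω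

theorem integral_sub_sq_eq_zero_of_ae_eq {a b : Ω → ℝ} (hab : a =ᵐ[μ] b) :
    ∫ ω, (a ω - b ω) ^ 2 ∂μ = 0 :=
  integral_eq_zero_of_ae <| by filter_upwards [hab] with ω hω; simp [hω]

theorem integral_perturbed_sub_sq_of_ae_eq {a b : Ω → ℝ} (hab : a =ᵐ[μ] b) (s g : Ω → ℝ)
    (r : ℝ) :
    ∫ ω, (a ω + r * s ω - b ω - r * g ω) ^ 2 ∂μ = (∫ ω, (s ω - g ω) ^ 2 ∂μ) * r ^ 2 := by
  have hpointwise : (fun ω => (a ω + r * s ω - b ω - r * g ω) ^ 2)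
      =ᵐ[μ] fun ω => r ^ 2 * (s ω - g ω) ^ 2 := by
    filter_upwards [hab] with ω hω
    rw [hω]; ring
  rw [integral_congr_ae hpointwise, integral_const_mul, mul_comm]

end

theorem hasDerivAt_const_mul_sq_zero (c : ℝ) : HasDerivAt (fun r : ℝ => c * r ^ 2) 0 0 := by
  simpa using (hasDerivAt_pow 2 (0 : ℝ)).const_mul c

theorem neyman_orthogonality_of_dml_cmr_score_general
    {Ω : Type*} {m0 : MeasurableSpace Ω} (μ : Measure Ω) [IsProbabilityMeasure μ]
    {𝒳 : Type*}
    (m : MeasurableSpace Ω)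
    (Y : Ω → ℝ) (X : Ω → 𝒳) (f₀ : 𝒳 → ℝ)
    (hY : MemLp Y 2 μ) (hf₀X : MemLp (fun ω => f₀ (X ω)) 2 μ)
    (hCMR : μ[(fun ω => Y ω - f₀ (X ω))|m] =ᵐ[μ] 0) :
    (∫ ω, ((μ[Y|m]) ω - (μ[(fun ω' => f₀ (X ω'))|m]) ω) ^ 2 ∂μ = 0) ∧
    (∀ s g : Ω → ℝ, Measurable[m] s → Measurable[m] g →
      MemLp s 2 μ → MemLp g 2 μ →
      HasDerivAt
        (fun r : ℝ => ∫ ω,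
          ((μ[Y|m]) ω + r * s ω - (μ[(fun ω' => f₀ (X ω'))|m]) ω - r * g ω) ^ 2 ∂μ)
        0 0) := by
  have hs₀_eq_g₀ : μ[Y|m] =ᵐ[μ] μ[(fun ω => f₀ (X ω))|m] :=
    condExp_ae_eq_of_condExp_sub_ae_eq_zero (hY.integrable one_le_two)
      (hf₀X.integrable one_le_two) hCMR
  refine ⟨integral_sub_sq_eq_zero_of_ae_eq hs₀_eq_g₀, fun s g _ _ _ _ => ?_⟩
  simp_rw [integral_perturbed_sub_sq_of_ae_eq hs₀_eq_g₀ s g]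
  exact hasDerivAt_const_mul_sq_zero _

/-- **Neyman orthogonality of the DML-CMR score.**
Let `s₀(C) = E[Y | C]` and `g₀(f₀, C) = E[f₀(X) | C]` (conditioning on `C` is modelled by
the sub-σ-algebra `m` it generates), and suppose the conditional moment restriction
`E[Y − f₀(X) | C] = 0` holds almost surely.  Then the score
`ψ(D; f, (s,g)) = (s(C) − g(f,C))²` obeys the Neyman orthogonality conditions at
`(f₀, (s₀, g₀))`: (i) `E[(s₀(C) − g₀(f₀,C))²] = 0`, and (ii) for every square-integrable
(`m`-measurable) perturbation pair `(s, g)`, the Gateaux derivative at `r = 0` of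
`r ↦ E[(s₀(C) + r·s(C) − g₀(f₀,C) − r·g(C))²]` equals `0`. -/
theorem neyman_orthogonality_of_dml_cmr_score
    {Ω : Type*} {m0 : MeasurableSpace Ω} (μ : Measure Ω) [IsProbabilityMeasure μ]
    {𝒳 : Type*} [MeasurableSpace 𝒳]
    (m : MeasurableSpace Ω) (hm : m ≤ m0)
    (Y : Ω → ℝ) (X : Ω → 𝒳) (f₀ : 𝒳 → ℝ)
    (hY : MemLp Y 2 μ) (hf₀X : MemLp (fun ω => f₀ (X ω)) 2 μ)
    (hCMR : μ[(fun ω => Y ω - f₀ (X ω))|m] =ᵐ[μ] 0) :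
    (∫ ω, ((μ[Y|m]) ω - (μ[(fun ω' => f₀ (X ω'))|m]) ω) ^ 2 ∂μ = 0) ∧
    (∀ s g : Ω → ℝ, Measurable[m] s → Measurable[m] g →
      MemLp s 2 μ → MemLp g 2 μ →
      HasDerivAt
        (fun r : ℝ => ∫ ω,
          ((μ[Y|m]) ω + r * s ω - (μ[(fun ω' => f₀ (X ω'))|m]) ω - r * g ω) ^ 2 ∂μ)
        0 0) :=
  neyman_orthogonality_of_dml_cmr_score_general (m0 := m0) μ m Y X f₀ hY hf₀X hCMR
end

section
/- The score function of standard two-stage CMR estimators, ℓ(f, g) = (Y − g(f, C))², is not Neyman orthogonal at the true parameters (f₀, g₀). Precisely: (i) E[(Y − g₀(f₀, C))²] = E[(Y − E[Y|C])²], which is strictly positive whenever Y is not almost surely equal to E[Y|C], so the requirement that the score have zero expectation at the true parameters fails; and (ii) for any square-integrable perturbation g : 𝒞 → ℝ, the Gateaux derivative at r = 0 of the map r ↦ E[(Y − g₀(f₀, C) − r·g(C))²] equals −2·E[(Y − E[Y|C])·g(C)], which is nonzero for general g. -/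
/-!
Under the conditional moment restriction, `E[f₀(X) | C] = E[Y | C]` almost surely, so the
score at the true parameters is the squared residual `Z = Y - E[Y | C]`. Its expectation is the
integral of a square, positive unless `Z = 0` a.s., and `r ↦ E[(Z - r g)²]` is the quadratic
`E[Z²] - 2 r E[Z g] + r² E[g²]`, whose slope at `0` is `-2 E[Z g]`.
-/

open MeasureTheory ProbabilityTheory

namespace MeasureTheory

variable {Ω : Type*} {m m0 : MeasurableSpace Ω} {μ : Measure Ω}

lemma condExp_ae_eq_of_condExp_sub_ae_eq_zero {f g : Ω → ℝ} (hf : Integrable f μ)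
    (hg : Integrable g μ) (h : μ[f - g|m] =ᵐ[μ] 0) : μ[g|m] =ᵐ[μ] μ[f|m] := by
  filter_upwards [condExp_sub hf hg m, h] with ω hsub hzero
  rw [hzero, Pi.zero_apply, Pi.sub_apply] at hsub
  linarith

lemma integral_sq_pos_of_not_ae_eq_zero {Z : Ω → ℝ} (hZ : MemLp Z 2 μ) (h : ¬ Z =ᵐ[μ] 0) :
    0 < ∫ ω, Z ω ^ 2 ∂μ := by
  refine (integral_nonneg fun ω => sq_nonneg (Z ω)).lt_of_ne fun hzero => h ?_
  filter_upwards [(integral_eq_zero_iff_of_nonneg (fun ω => sq_nonneg (Z ω))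
    hZ.integrable_sq).mp hzero.symm] with ω hω
  exact pow_eq_zero_iff two_ne_zero |>.mp hω

lemma integral_sub_mul_sq {Z g : Ω → ℝ} (hZ : MemLp Z 2 μ) (hg : MemLp g 2 μ) (r : ℝ) :
    ∫ ω, (Z ω - r * g ω) ^ 2 ∂μ
      = ∫ ω, Z ω ^ 2 ∂μ - 2 * r * ∫ ω, Z ω * g ω ∂μ + r ^ 2 * ∫ ω, g ω ^ 2 ∂μ := by
  have hZg : Integrable (fun ω => Z ω * g ω) μ := hZ.integrable_mul hg
  have hexpand : ∀ ω, (Z ω - r * g ω) ^ 2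
      = Z ω ^ 2 - 2 * r * (Z ω * g ω) + r ^ 2 * g ω ^ 2 := fun ω => by ring
  have hfirst : Integrable (fun ω => Z ω ^ 2 - 2 * r * (Z ω * g ω)) μ :=
    hZ.integrable_sq.sub (hZg.const_mul _)
  simp_rw [hexpand]
  rw [integral_add hfirst (hg.integrable_sq.const_mul _),
    integral_sub hZ.integrable_sq (hZg.const_mul _), integral_const_mul, integral_const_mul]

lemma hasDerivAt_integral_sub_mul_sq {Z g : Ω → ℝ} (hZ : MemLp Z 2 μ) (hg : MemLp g 2 μ)
    (r : ℝ) :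
    HasDerivAt (fun s : ℝ => ∫ ω, (Z ω - s * g ω) ^ 2 ∂μ)
      (-2 * ∫ ω, Z ω * g ω ∂μ + 2 * r * ∫ ω, g ω ^ 2 ∂μ) r := by
  rw [funext (integral_sub_mul_sq hZ hg)]
  have hlin := ((hasDerivAt_id' r).const_mul 2).mul_const (∫ ω, Z ω * g ω ∂μ)
  have hquad := (hasDerivAt_pow 2 r).mul_const (∫ ω, g ω ^ 2 ∂μ)
  exact ((hlin.const_sub (∫ ω, Z ω ^ 2 ∂μ)).add hquad).congr_deriv (by norm_num)

end MeasureTheory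

/-- Conditioning on `C` is modelled by the sub-σ-algebra `m` it generates. -/
theorem standard_two_stage_score_not_neyman_orthogonal_general
    {Ω : Type*} {m0 : MeasurableSpace Ω} (μ : Measure Ω) [IsProbabilityMeasure μ]
    {𝒳 : Type*} [MeasurableSpace 𝒳]
    (m : MeasurableSpace Ω)
    (Y : Ω → ℝ) (X : Ω → 𝒳) (f₀ : 𝒳 → ℝ)
    (hY : MemLp Y 2 μ) (hf₀X : MemLp (fun ω => f₀ (X ω)) 2 μ)
    (hCMR : μ[(fun ω => Y ω - f₀ (X ω))|m] =ᵐ[μ] 0) :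
    (∫ ω, (Y ω - (μ[(fun ω' => f₀ (X ω'))|m]) ω) ^ 2 ∂μ
        = ∫ ω, (Y ω - (μ[Y|m]) ω) ^ 2 ∂μ) ∧
    (¬ (Y =ᵐ[μ] μ[Y|m]) →
      0 < ∫ ω, (Y ω - (μ[(fun ω' => f₀ (X ω'))|m]) ω) ^ 2 ∂μ) ∧
    (∀ g : Ω → ℝ, Measurable[m] g → MemLp g 2 μ →
      HasDerivAt
        (fun r : ℝ => ∫ ω, (Y ω - (μ[(fun ω' => f₀ (X ω'))|m]) ω - r * g ω) ^ 2 ∂μ)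
        (-2 * ∫ ω, (Y ω - (μ[Y|m]) ω) * g ω ∂μ) 0) := by
  have hcond : μ[(fun ω' => f₀ (X ω'))|m] =ᵐ[μ] μ[Y|m] :=
    condExp_ae_eq_of_condExp_sub_ae_eq_zero (hY.integrable one_le_two)
      (hf₀X.integrable one_le_two) hCMR
  have hZ : MemLp (fun ω => Y ω - (μ[(fun ω' => f₀ (X ω'))|m]) ω) 2 μ :=
    hY.sub (hf₀X.condExp one_le_two)
  have hresid : (fun ω => Y ω - (μ[(fun ω' => f₀ (X ω'))|m]) ω)
      =ᵐ[μ] fun ω => Y ω - (μ[Y|m]) ω := by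
    filter_upwards [hcond] with ω hω
    rw [hω]
  refine ⟨integral_congr_ae (hresid.fun_comp (· ^ 2)),
    fun hne => integral_sq_pos_of_not_ae_eq_zero hZ fun hzero => hne ?_, fun g _ hg => ?_⟩
  · filter_upwards [hzero, hcond] with ω hω hcondω
    rw [Pi.zero_apply, hcondω, sub_eq_zero] at hω
    exact hω
  · have hcross : ∫ ω, (Y ω - (μ[(fun ω' => f₀ (X ω'))|m]) ω) * g ω ∂μ
        = ∫ ω, (Y ω - (μ[Y|m]) ω) * g ω ∂μ :=
      integral_congr_ae (hresid.mul (ae_eq_refl g))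
    simpa only [hcross, mul_zero, zero_mul, add_zero] using
      hasDerivAt_integral_sub_mul_sq hZ hg 0

/-- **The standard two-stage CMR score is not Neyman orthogonal.**
Let `g₀(f₀, C) = E[f₀(X) | C]` (conditioning on `C` is modelled by the sub-σ-algebra `m`
it generates), and suppose the conditional moment restriction `E[Y − f₀(X) | C] = 0` holds
almost surely.  Then for the standard two-stage score `ℓ(f,g) = (Y − g(f,C))²`:
(i) `E[(Y − g₀(f₀,C))²] = E[(Y − E[Y|C])²]`, which is strictly positive whenever `Y` is
not almost surely equal to `E[Y|C]`, so the zero-expectation requirement at the true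
parameters fails; and (ii) for every square-integrable (`m`-measurable) perturbation `g`,
the Gateaux derivative at `r = 0` of `r ↦ E[(Y − g₀(f₀,C) − r·g(C))²]` equals
`−2·E[(Y − E[Y|C])·g(C)]`. -/
theorem standard_two_stage_score_not_neyman_orthogonal
    {Ω : Type*} {m0 : MeasurableSpace Ω} (μ : Measure Ω) [IsProbabilityMeasure μ]
    {𝒳 : Type*} [MeasurableSpace 𝒳]
    (m : MeasurableSpace Ω) (hm : m ≤ m0)
    (Y : Ω → ℝ) (X : Ω → 𝒳) (f₀ : 𝒳 → ℝ)
    (hY : MemLp Y 2 μ) (hf₀X : MemLp (fun ω => f₀ (X ω)) 2 μ)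
    (hCMR : μ[(fun ω => Y ω - f₀ (X ω))|m] =ᵐ[μ] 0) :
    (∫ ω, (Y ω - (μ[(fun ω' => f₀ (X ω'))|m]) ω) ^ 2 ∂μ
        = ∫ ω, (Y ω - (μ[Y|m]) ω) ^ 2 ∂μ) ∧
    (¬ (Y =ᵐ[μ] μ[Y|m]) →
      0 < ∫ ω, (Y ω - (μ[(fun ω' => f₀ (X ω'))|m]) ω) ^ 2 ∂μ) ∧
    (∀ g : Ω → ℝ, Measurable[m] g → MemLp g 2 μ →
      HasDerivAt
        (fun r : ℝ => ∫ ω, (Y ω - (μ[(fun ω' => f₀ (X ω'))|m]) ω - r * g ω) ^ 2 ∂μ)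
        (-2 * ∫ ω, (Y ω - (μ[Y|m]) ω) * g ω ∂μ) 0) :=
  standard_two_stage_score_not_neyman_orthogonal_general (m0 := m0) μ m Y X f₀ hY hf₀X hCMR
end

section
/- Suboptimality bound for the offline IV bandit policy: let 𝒞 be a context space with test distribution ℙ_test, 𝒜 an action space, and {f_θ : 𝒞 × 𝒜 → ℝ} a parameterised family such that every f_θ attains a maximum over 𝒜 for each c. Let (θ̂_N) be a sequence of Θ-valued random vectors such that for every ζ ∈ (0,1] there exist M, K > 0 with ℙ(‖θ̂_N − θ₀‖ ≤ M·N^{−1/2}) ≥ 1 − ζ for all integers N ≥ K, and suppose ‖f_θ(c,a) − f_{θ₀}(c,a)‖ ≤ L·‖θ − θ₀‖ for all c in the support of ℙ_test, a ∈ 𝒜, θ ∈ Θ. Define the policies π̂_N(c) ∈ argmax_{a∈𝒜} f_{θ̂_N}(c,a) and π*(c) ∈ argmax_{a∈𝒜} f_{θ₀}(c,a), and the value V(π) = E_{c∼ℙ_test}[f_{θ₀}(c, π(c))]. Then for every ζ ∈ (0,1] there exist M', K' > 0 such that for all integers N ≥ K', ℙ(V(π*) − V(π̂_N) ≤ 2·L·M'·N^{−1/2})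 ≥ 1 − ζ; that is, the suboptimality of π̂_N is O(L·N^{−1/2}) with probability 1 − ζ. -/
open MeasureTheory ProbabilityTheory

/-! A greedy policy for a reward `r'` that is uniformly `δ`-close to the true reward `r` loses at
most `2δ` per context against any other action: `r a - r b ≤ (r' a + δ) - (r' b - δ) ≤ 2δ`
since `r' a ≤ r' b`. Integrating over contexts bounds the suboptimality by `2δ`, and on the event
`‖θ̂_N - θ₀‖ ≤ M N^(-1/2)` the Lipschitz bound gives `δ = L M N^(-1/2)`, so the rate of the
estimator transfers to the suboptimality with the same constants. -/

noncomputable def policyValue {𝒞 𝒜 : Type*} [MeasurableSpace 𝒞] (μ : Measure 𝒞)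
    (r : 𝒞 → 𝒜 → ℝ) (π : 𝒞 → 𝒜) : ℝ :=
  ∫ c, r c (π c) ∂μ

lemma sub_le_two_mul_of_abs_sub_le_of_forall_le {α : Type*} {r r' : α → ℝ} {δ : ℝ}
    (hclose : ∀ a, |r' a - r a| ≤ δ) {b : α} (hb : ∀ a, r' a ≤ r' b) (a : α) :
    r a - r b ≤ 2 * δ := by
  have ha := (abs_le.mp (hclose a)).1
  have hb' := (abs_le.mp (hclose b)).2
  linarith [hb a]

lemma integral_sub_integral_le_of_ae_sub_le {α : Type*} [MeasurableSpace α] {μ : Measure α}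
    [IsProbabilityMeasure μ] {u v : α → ℝ} (hu : Integrable u μ) (hv : Integrable v μ) {C : ℝ}
    (h : ∀ᵐ x ∂μ, u x - v x ≤ C) :
    ∫ x, u x ∂μ - ∫ x, v x ∂μ ≤ C := by
  have : ∫ x, u x - v x ∂μ ≤ ∫ _, C ∂μ := integral_mono_ae (hu.sub hv) (integrable_const C) h
  rwa [integral_sub hu hv, integral_const, probReal_univ, one_smul] at this

lemma policyValue_sub_greedy_le {𝒞 𝒜 : Type*} [MeasurableSpace 𝒞] {μ : Measure 𝒞}
    [IsProbabilityMeasure μ] {r r' : 𝒞 → 𝒜 → ℝ} {δ : ℝ}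
    (hclose : ∀ᵐ c ∂μ, ∀ a, |r' c a - r c a| ≤ δ) {π π' : 𝒞 → 𝒜}
    (hπ : Integrable (fun c => r c (π c)) μ) (hπ' : Integrable (fun c => r c (π' c)) μ)
    (hgreedy : ∀ c a, r' c a ≤ r' c (π' c)) :
    policyValue μ r π - policyValue μ r π' ≤ 2 * δ :=
  integral_sub_integral_le_of_ae_sub_le hπ hπ' <| hclose.mono fun c hc =>
    sub_le_two_mul_of_abs_sub_le_of_forall_le hc (hgreedy c) (π c)

theorem offline_iv_bandit_suboptimality_general
    {Ω : Type*} [MeasureSpace Ω]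
    {𝒞 𝒜 : Type*} [MeasurableSpace 𝒞]
    (Ptest : Measure 𝒞) [IsProbabilityMeasure Ptest]
    {d : ℕ} (Θ : Set (EuclideanSpace ℝ (Fin d))) (θ₀ : EuclideanSpace ℝ (Fin d))
    (f : EuclideanSpace ℝ (Fin d) → 𝒞 → 𝒜 → ℝ)
    (θhat : ℕ → Ω → EuclideanSpace ℝ (Fin d))
    (hmem : ∀ N ω, θhat N ω ∈ Θ)
    (L : ℝ) (hL : 0 < L)
    (hLip : ∀ θ ∈ Θ, ∀ᵐ c ∂Ptest, ∀ a : 𝒜, |f θ c a - f θ₀ c a| ≤ L * ‖θ - θ₀‖)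
    (πhat : ℕ → Ω → 𝒞 → 𝒜) (πstar : 𝒞 → 𝒜)
    (hπhat : ∀ N ω c a, f (θhat N ω) c a ≤ f (θhat N ω) c (πhat N ω c))
    (hInt : ∀ π : 𝒞 → 𝒜, Integrable (fun c => f θ₀ c (π c)) Ptest)
    (hrate : ∀ ζ ∈ Set.Ioc (0:ℝ) 1, ∃ M K : ℝ, 0 < M ∧ 0 < K ∧
      ∀ N : ℕ, K ≤ (N : ℝ) →
        ENNReal.ofReal (1 - ζ) ≤
          ℙ {ω | ‖θhat N ω - θ₀‖ ≤ M * (N : ℝ) ^ (-(1:ℝ)/2)}) :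
    ∀ ζ ∈ Set.Ioc (0:ℝ) 1, ∃ M' K' : ℝ, 0 < M' ∧ 0 < K' ∧
      ∀ N : ℕ, K' ≤ (N : ℝ) →
        ENNReal.ofReal (1 - ζ) ≤
          ℙ {ω | (∫ c, f θ₀ c (πstar c) ∂Ptest) - ∫ c, f θ₀ c (πhat N ω c) ∂Ptest
              ≤ 2 * L * M' * (N : ℝ) ^ (-(1:ℝ)/2)} := by
  intro ζ hζ
  obtain ⟨M, K, hM, hK, hconf⟩ := hrate ζ hζ
  refine ⟨M, K, hM, hK, fun N hN => (hconf N hN).trans (measure_mono fun ω hω => ?_)⟩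
  have hclose : ∀ᵐ c ∂Ptest, ∀ a,
      |f (θhat N ω) c a - f θ₀ c a| ≤ L * (M * (N : ℝ) ^ (-(1:ℝ)/2)) :=
    (hLip _ (hmem N ω)).mono fun c hc a =>
      (hc a).trans (mul_le_mul_of_nonneg_left hω hL.le)
  rw [Set.mem_ofPred_eq, mul_assoc, mul_assoc]
  exact policyValue_sub_greedy_le hclose (hInt πstar) (hInt (πhat N ω)) (hπhat N ω)

/-- **Suboptimality bound for the offline IV bandit policy.**
If the parameter estimates `θhat N` converge to `θ₀` at rate `N^(-1/2)` with high
confidence and the reward family `f` is `L`-Lipschitz in the parameter (for contexts in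
the support of the test distribution `Ptest`, uniformly over actions), then the greedy
policy `πhat N` derived from `f (θhat N)` has suboptimality at most `2·L·M'·N^(-1/2)`
with high confidence, where the value of a policy `π` is `V(π) = E_{c∼Ptest}[f θ₀ c (π c)]`
and `πstar` is a greedy policy for the true `f θ₀`. -/
theorem offline_iv_bandit_suboptimality
    {Ω : Type*} [MeasureSpace Ω] [IsProbabilityMeasure (ℙ : Measure Ω)]
    {𝒞 𝒜 : Type*} [MeasurableSpace 𝒞]
    (Ptest : Measure 𝒞) [IsProbabilityMeasure Ptest]
    {d : ℕ} (Θ : Set (EuclideanSpace ℝ (Fin d))) (θ₀ : EuclideanSpace ℝ (Fin d))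
    (hθ₀ : θ₀ ∈ Θ)
    (f : EuclideanSpace ℝ (Fin d) → 𝒞 → 𝒜 → ℝ)
    (θhat : ℕ → Ω → EuclideanSpace ℝ (Fin d))
    (hmem : ∀ N ω, θhat N ω ∈ Θ)
    (L : ℝ) (hL : 0 < L)
    (hLip : ∀ θ ∈ Θ, ∀ᵐ c ∂Ptest, ∀ a : 𝒜, |f θ c a - f θ₀ c a| ≤ L * ‖θ - θ₀‖)
    (πhat : ℕ → Ω → 𝒞 → 𝒜) (πstar : 𝒞 → 𝒜)
    (hπhat : ∀ N ω c a, f (θhat N ω) c a ≤ f (θhat N ω) c (πhat N ω c))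
    (hπstar : ∀ c a, f θ₀ c a ≤ f θ₀ c (πstar c))
    (hInt : ∀ π : 𝒞 → 𝒜, Integrable (fun c => f θ₀ c (π c)) Ptest)
    (hrate : ∀ ζ ∈ Set.Ioc (0:ℝ) 1, ∃ M K : ℝ, 0 < M ∧ 0 < K ∧
      ∀ N : ℕ, K ≤ (N : ℝ) →
        ENNReal.ofReal (1 - ζ) ≤
          ℙ {ω | ‖θhat N ω - θ₀‖ ≤ M * (N : ℝ) ^ (-(1:ℝ)/2)}) :
    ∀ ζ ∈ Set.Ioc (0:ℝ) 1, ∃ M' K' : ℝ, 0 < M' ∧ 0 < K' ∧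
      ∀ N : ℕ, K' ≤ (N : ℝ) →
        ENNReal.ofReal (1 - ζ) ≤
          ℙ {ω | (∫ c, f θ₀ c (πstar c) ∂Ptest) - ∫ c, f θ₀ c (πhat N ω c) ∂Ptest
              ≤ 2 * L * M' * (N : ℝ) ^ (-(1:ℝ)/2)} :=
  offline_iv_bandit_suboptimality_general Ptest Θ θ₀ f θhat hmem L hL hLip πhat πstar hπhat hInt
    hrate
end

section
/- Discounting inequality used in the optimality proof: for all real numbers γ ∈ (0,1], U ∈ (0,1] and τ ≥ 0, one has U·γ^τ / (1 − γ^τ·(1 − U)) ≥ γ^{τ/U}. Equivalently, setting x = γ^τ ∈ (0,1]: U·x + (1 − U)·x^{1 + 1/U} ≥ x^{1/U} for all x ∈ (0,1] and U ∈ (0,1]. (Note 1 − γ^τ(1−U) ≥ U > 0, so the left-hand side is well defined.) -/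
/-!
Put `x = γ ^ τ`. Since `U + (1 + 1/U)(1 - U) = 1/U`, weighted AM–GM with weights `U` and `1 - U`
applied to `x` and `x ^ (1 + 1/U)` gives `x ^ (1/U) ≤ U x + (1 - U) x ^ (1 + 1/U)`. Splitting
`x ^ (1 + 1/U) = x · x ^ (1/U)` and moving that term to the left turns this into
`x ^ (1/U) (1 - x (1 - U)) ≤ U x`, which is the discounting inequality because the factor
`1 - x (1 - U)` is at least `U > 0`.
-/

open Real Set

lemma le_one_sub_mul_one_sub {x U : ℝ} (hx : x ≤ 1) (hU : U ≤ 1) : U ≤ 1 - x * (1 - U) := by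
  nlinarith

lemma rpow_one_div_le_weighted_mean {x U : ℝ} (hx : 0 ≤ x) (hU₀ : 0 < U) (hU₁ : U ≤ 1) :
    x ^ (1 / U) ≤ U * x + (1 - U) * x ^ (1 + 1 / U) := calc
  x ^ (1 / U) = x ^ U * (x ^ (1 + 1 / U)) ^ (1 - U) := by
    rw [← rpow_mul hx, ← rpow_add' hx]
    · congr 1; field_simp; ring
    · field_simp; ring_nf; positivity
  _ ≤ U * x + (1 - U) * x ^ (1 + 1 / U) :=
    geom_mean_le_arith_mean2_weighted hU₀.le (by linarith) hx (by positivity) (by ring)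

lemma rpow_one_div_le_div {x U : ℝ} (hx₀ : 0 ≤ x) (hx₁ : x ≤ 1) (hU₀ : 0 < U)
    (hU₁ : U ≤ 1) :
    x ^ (1 / U) ≤ U * x / (1 - x * (1 - U)) := by
  have hden : 0 < 1 - x * (1 - U) := hU₀.trans_le (le_one_sub_mul_one_sub hx₁ hU₁)
  have hmean := rpow_one_div_le_weighted_mean hx₀ hU₀ hU₁
  rw [rpow_add' hx₀ (by positivity), rpow_one] at hmean
  rw [le_div_iff₀ hden]
  linarith

/-- **Discounting inequality used in the optimality proof.**
For all `γ, U ∈ (0,1]` and `τ ≥ 0`, one has `U·γ^τ / (1 − γ^τ·(1 − U)) ≥ γ^(τ/U)`;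
equivalently, setting `x = γ^τ ∈ (0,1]`, `U·x + (1−U)·x^(1+1/U) ≥ x^(1/U)` for all
`x ∈ (0,1]` and `U ∈ (0,1]`.  (As noted, `1 − γ^τ(1−U) ≥ U > 0`, so the left-hand
side of the first inequality is well defined.) -/
theorem discounting_inequality :
    (∀ γ U τ : ℝ, γ ∈ Set.Ioc (0:ℝ) 1 → U ∈ Set.Ioc (0:ℝ) 1 → 0 ≤ τ →
      γ ^ (τ / U) ≤ U * γ ^ τ / (1 - γ ^ τ * (1 - U))) ∧
    (∀ U x : ℝ, U ∈ Set.Ioc (0:ℝ) 1 → x ∈ Set.Ioc (0:ℝ) 1 →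
      x ^ ((1:ℝ) / U) ≤ U * x + (1 - U) * x ^ (1 + 1 / U)) ∧
    (∀ γ U τ : ℝ, γ ∈ Set.Ioc (0:ℝ) 1 → U ∈ Set.Ioc (0:ℝ) 1 → 0 ≤ τ →
      U ≤ 1 - γ ^ τ * (1 - U)) := by
  refine ⟨fun γ U τ hγ hU hτ => ?_,
    fun U x hU hx => rpow_one_div_le_weighted_mean hx.1.le hU.1 hU.2,
    fun γ U τ hγ hU hτ => le_one_sub_mul_one_sub (rpow_le_one hγ.1.le hγ.2 hτ) hU.2⟩
  rw [← mul_one_div, rpow_mul hγ.1.le]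
  exact rpow_one_div_le_div (rpow_nonneg hγ.1.le τ) (rpow_le_one hγ.1.le hγ.2 hτ) hU.1 hU.2
end
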